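/- arXiv:2504.07917 — 7 statements merged into one kernel-verified Lean document; each statement's English description precedes it below -/
import Mathlib

section
/- Let 0 → ℤ →ι S →p G → 0 be a short exact sequence of abelian groups and let χ : S → ℤ be a group homomorphism with χ(ι(n)) = 2n for all n ∈ ℤ. If the sequence splits, i.e. there exists a group homomorphism ψ : S → ℤ with ψ(ι(n)) = n for all n ∈ ℤ, then every x ∈ S whose image p(x) is a torsion element of G satisfies that χ(x) is even. In particular, if there exists x ∈ S with p(x) torsion in G and χ(x) odd, then the sequence does not split. -/
/-! A splitting `ψ` forces `χ = 2ψ` on every element some positive multiple of which lies in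
`ι(ℤ) = ker p`: the two homomorphisms agree on `ι(ℤ)`, and `ℤ` is torsion-free. -/

theorem AddMonoidHom.apply_eq_of_nsmul_mem {S A : Type*} [AddCommGroup S] [AddCommGroup A]
    [IsAddTorsionFree A] {f g : S →+ A} {H : AddSubgroup S} (hfg : ∀ y ∈ H, f y = g y)
    {x : S} {k : ℕ} (hk : k ≠ 0) (hx : k • x ∈ H) : f x = g x := by
  rw [← nsmul_right_inj hk, ← map_nsmul, ← map_nsmul]
  exact hfg _ hx

theorem AddMonoidHom.apply_eq_two_mul_of_nsmul_mem_range {S : Type*} [AddCommGroup S]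
    {ι : ℤ →+ S} {χ ψ : S →+ ℤ} (hχ : ∀ n : ℤ, χ (ι n) = 2 * n) (hψ : ∀ n : ℤ, ψ (ι n) = n)
    {x : S} {k : ℕ} (hk : k ≠ 0) (hx : k • x ∈ ι.range) : χ x = 2 * ψ x := by
  have hagree : ∀ y ∈ ι.range, χ y = (2 • ψ) y := by
    rintro _ ⟨n, rfl⟩
    simp [hχ, hψ]
  simpa using AddMonoidHom.apply_eq_of_nsmul_mem hagree hk hx

theorem skk_even_dim_split_implies_even_euler_on_torsion_general
    {S G : Type*} [AddCommGroup S] [AddCommGroup G]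
    (ι : ℤ →+ S) (p : S →+ G)
    (hexact : ι.range = p.ker)
    (χ : S →+ ℤ) (hχ : ∀ n : ℤ, χ (ι n) = 2 * n) :
    ((∃ ψ : S →+ ℤ, ∀ n : ℤ, ψ (ι n) = n) →
      ∀ x : S, (∃ k : ℕ, 0 < k ∧ k • p x = 0) → Even (χ x)) ∧
    ((∃ x : S, (∃ k : ℕ, 0 < k ∧ k • p x = 0) ∧ Odd (χ x)) →
      ¬ (∃ ψ : S →+ ℤ, ∀ n : ℤ, ψ (ι n) = n)) := by
  have even_of_split : (∃ ψ : S →+ ℤ, ∀ n : ℤ, ψ (ι n) = n) →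
      ∀ x : S, (∃ k : ℕ, 0 < k ∧ k • p x = 0) → Even (χ x) := by
    rintro ⟨ψ, hψ⟩ x ⟨k, hk, hkx⟩
    have hmem : k • x ∈ ι.range := by
      rw [hexact, AddMonoidHom.mem_ker, map_nsmul, hkx]
    rw [AddMonoidHom.apply_eq_two_mul_of_nsmul_mem_range hχ hψ hk.ne' hmem]
    exact even_two_mul _
  refine ⟨even_of_split, ?_⟩
  rintro ⟨x, htors, hodd⟩ hsplit
  exact Int.not_even_iff_odd.mpr hodd (even_of_split hsplit x htors)

/-- If the short exact sequence `0 → ℤ → S → G → 0` (with `χ ∘ ι = 2·`)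
splits, then every `x ∈ S` whose image `p x` is torsion in `G` has even `χ x`;
in particular, if some `x` has `p x` torsion and `χ x` odd, the sequence does not split. -/
theorem skk_even_dim_split_implies_even_euler_on_torsion
    {S G : Type*} [AddCommGroup S] [AddCommGroup G]
    (ι : ℤ →+ S) (p : S →+ G)
    (hι : Function.Injective ι) (hp : Function.Surjective p)
    (hexact : ι.range = p.ker)
    (χ : S →+ ℤ) (hχ : ∀ n : ℤ, χ (ι n) = 2 * n) :
    ((∃ ψ : S →+ ℤ, ∀ n : ℤ, ψ (ι n) = n) →
      ∀ x : S, (∃ k : ℕ, 0 < k ∧ k • p x = 0) → Even (χ x)) ∧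
    ((∃ x : S, (∃ k : ℕ, 0 < k ∧ k • p x = 0) ∧ Odd (χ x)) →
      ¬ (∃ ψ : S →+ ℤ, ∀ n : ℤ, ψ (ι n) = n)) :=
  skk_even_dim_split_implies_even_euler_on_torsion_general ι p hexact χ hχ
end

section
/- Let 0 → ℤ →ι S →p G → 0 be a short exact sequence of abelian groups and let χ : S → ℤ be a group homomorphism with χ(ι(n)) = 2n for all n ∈ ℤ. Assume that G is finitely generated and that every x ∈ S whose image p(x) is a torsion element of G satisfies that χ(x) is even. Then the sequence splits: there exists a group homomorphism ψ : S → ℤ with ψ(ι(n)) = n for all n ∈ ℤ. -/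
/-!
Since `G` is finitely generated, `G ⧸ torsion` is free, so the projection `q : S → G ⧸ torsion`
has a section `s`. The endomorphism `r = id - s ∘ q` of `S` fixes `ι(ℤ) = ker p` and sends every
element to one with torsion image in `G`, so `χ ∘ r` takes only even values. Then `ψ = (χ ∘ r) / 2`
is a homomorphism with `ψ (ι n) = χ (ι n) / 2 = n`.
-/

theorem AddMonoidHom.exists_two_mul_eq_of_even {S : Type*} [AddCommGroup S] (f : S →+ ℤ)
    (hf : ∀ x, Even (f x)) : ∃ g : S →+ ℤ, ∀ x, f x = 2 * g x := by
  refine ⟨⟨⟨fun x => f x / 2, by simp⟩, fun x y => ?_⟩, fun x => ?_⟩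
  · simpa using Int.add_ediv_of_dvd_right (a := f x) (even_iff_two_dvd.mp (hf y))
  · exact (Int.mul_ediv_cancel' (even_iff_two_dvd.mp (hf x))).symm

theorem AddMonoidHom.exists_fixing_ker_into_torsion_preimage
    {S G : Type*} [AddCommGroup S] [AddCommGroup G] [AddGroup.FG G]
    (p : S →+ G) (hp : Function.Surjective p) :
    ∃ r : S →+ S, (∀ x ∈ p.ker, r x = x) ∧ ∀ x, IsOfFinAddOrder (p (r x)) := by
  have : Module.Finite ℤ G := Module.Finite.iff_addGroup_fg.mpr ‹_›
  let q : S →ₗ[ℤ] G ⧸ Submodule.torsion ℤ G := (Submodule.torsion ℤ G).mkQ ∘ₗ p.toIntLinearMap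
  obtain ⟨s, hs⟩ := Module.projective_lifting_property q LinearMap.id
    ((Submodule.mkQ_surjective _).comp hp)
  refine ⟨AddMonoidHom.id S - (s ∘ₗ q).toAddMonoidHom, fun x hx => ?_, fun x => ?_⟩
  · simp [q, AddMonoidHom.mem_ker.mp hx]
  · have hqs : q (s (q x)) = q x := LinearMap.congr_fun hs (q x)
    have hq : q (x - s (q x)) = 0 := by rw [map_sub, hqs, sub_self]
    have : p (x - s (q x)) ∈ Submodule.torsion ℤ G := (Submodule.Quotient.mk_eq_zero _).mp hq
    rw [← AddCommGroup.mem_torsion, ← Submodule.torsion_int]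
    exact this

theorem skk_even_dim_splits_of_even_euler_on_torsion_general
    {S G : Type*} [AddCommGroup S] [AddCommGroup G]
    (ι : ℤ →+ S) (p : S →+ G)
    (hp : Function.Surjective p)
    (hexact : ι.range = p.ker)
    (χ : S →+ ℤ) (hχ : ∀ n : ℤ, χ (ι n) = 2 * n)
    (hfg : AddGroup.FG G)
    (heven : ∀ x : S, (∃ k : ℕ, 0 < k ∧ k • p x = 0) → Even (χ x)) :
    ∃ ψ : S →+ ℤ, ∀ n : ℤ, ψ (ι n) = n := by
  obtain ⟨r, hr_ker, hr_torsion⟩ := p.exists_fixing_ker_into_torsion_preimage hp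
  obtain ⟨ψ, hψ⟩ := (χ.comp r).exists_two_mul_eq_of_even fun x =>
    heven _ (isOfFinAddOrder_iff_nsmul_eq_zero.mp (hr_torsion x))
  refine ⟨ψ, fun n => ?_⟩
  have hrι : r (ι n) = ι n := hr_ker _ (hexact ▸ ⟨n, rfl⟩)
  have := hψ (ι n)
  rw [AddMonoidHom.comp_apply, hrι, hχ] at this
  omega

/-- If `G` is finitely generated and every `x ∈ S` whose image `p x` is
torsion in `G` has even `χ x`, then the short exact sequence `0 → ℤ → S → G → 0`
(with `χ ∘ ι = 2·`) splits. -/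
theorem skk_even_dim_splits_of_even_euler_on_torsion
    {S G : Type*} [AddCommGroup S] [AddCommGroup G]
    (ι : ℤ →+ S) (p : S →+ G)
    (hι : Function.Injective ι) (hp : Function.Surjective p)
    (hexact : ι.range = p.ker)
    (χ : S →+ ℤ) (hχ : ∀ n : ℤ, χ (ι n) = 2 * n)
    (hfg : AddGroup.FG G)
    (heven : ∀ x : S, (∃ k : ℕ, 0 < k ∧ k • p x = 0) → Even (χ x)) :
    ∃ ψ : S →+ ℤ, ∀ n : ℤ, ψ (ι n) = n :=
  skk_even_dim_splits_of_even_euler_on_torsion_general ι p hp hexact χ hχ hfg heven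
end

section
/- Let 0 → ℤ →ι S →p G → 0 be a short exact sequence of abelian groups, let χ : S → ℤ be a group homomorphism with χ(ι(n)) = 2n for all n ∈ ℤ, and let w : G → ℤ/2 be a group homomorphism such that w(p(x)) equals χ(x) mod 2 for all x ∈ S. Then the homomorphism S → G × ℤ given by x ↦ (p(x), χ(x)) is injective, and its image is exactly the pullback subgroup G ×_{ℤ/2} ℤ = {(g,n) ∈ G × ℤ : w(g) = n mod 2}; consequently S is isomorphic to G ×_{ℤ/2} ℤ via x ↦ (p(x), χ(x)). -/
/-!
An element of `ker (p, χ)` lies in `ker p = ι ℤ`, say it is `ι n`, and then `χ (ι n) = 2n = 0`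
forces it to vanish. Conversely, given `(g, n)` with `w g ≡ n (mod 2)`, lift `g` to some `x`;
then `n - χ x` is even, say `2m`, and `x + ι m` still lies over `g` while `χ (x + ι m) = n`.
-/

/-- The pullback `G ×_{ℤ/2} ℤ` of a homomorphism `w : G → ℤ/2` and the mod-2
reduction `ℤ → ℤ/2`, as a subgroup of `G × ℤ`. -/
def pullbackZmodTwo {G : Type*} [AddCommGroup G] (w : G →+ ZMod 2) :
    AddSubgroup (G × ℤ) where
  carrier := {q : G × ℤ | w q.1 = (q.2 : ZMod 2)}
  zero_mem' := by simp
  add_mem' := by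
    intro a b ha hb
    simp only [Set.mem_setOf_eq, Prod.fst_add, Prod.snd_add, map_add, Int.cast_add] at *
    rw [ha, hb]
  neg_mem' := by
    intro a ha
    simp only [Set.mem_setOf_eq, Prod.fst_neg, Prod.snd_neg, map_neg, Int.cast_neg] at *
    rw [ha]

theorem AddMonoidHom.injective_prod_of_ker_le_range {A S G Z : Type*} [AddGroup A] [AddGroup S]
    [AddGroup G] [AddGroup Z] (ι : A →+ S) (p : S →+ G) (χ : S →+ Z) (hker : p.ker ≤ ι.range)
    (hχι : Function.Injective (χ.comp ι)) : Function.Injective (p.prod χ) := by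
  refine (injective_iff_map_eq_zero _).2 fun x hx => ?_
  obtain ⟨hpx, hχx⟩ := Prod.ext_iff.1 hx
  obtain ⟨a, rfl⟩ := hker hpx
  have ha : a = 0 := hχι (by simpa using hχx)
  rw [ha, map_zero]

theorem AddMonoidHom.range_prod_eq_pullbackZmodTwo {S G : Type*} [AddCommGroup S]
    [AddCommGroup G] (ι : ℤ →+ S) (p : S →+ G) (hp : Function.Surjective p)
    (hrange : ι.range ≤ p.ker) (χ : S →+ ℤ) (hχ : ∀ n : ℤ, χ (ι n) = 2 * n)
    (w : G →+ ZMod 2) (hw : ∀ x : S, w (p x) = ((χ x : ℤ) : ZMod 2)) :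
    (p.prod χ).range = pullbackZmodTwo w := by
  refine le_antisymm ?_ fun q hq => ?_
  · rintro _ ⟨x, rfl⟩
    exact hw x
  · obtain ⟨x, hx⟩ := hp q.1
    have heven : (2 : ℤ) ∣ q.2 - χ x := by
      have hq' : w q.1 = (q.2 : ZMod 2) := hq
      rw [← hx, hw] at hq'
      exact_mod_cast (ZMod.intCast_eq_intCast_iff_dvd_sub _ _ 2).1 hq'
    obtain ⟨m, hm⟩ := heven
    have hpι : p (ι m) = 0 := hrange ⟨m, rfl⟩
    refine ⟨x + ι m, Prod.ext ?_ ?_⟩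
    · simp [hpι, hx]
    · simp only [map_add, prod_apply, Prod.snd_add, hχ]
      omega

theorem skk_even_dim_pullback_description_general
    {S G : Type*} [AddCommGroup S] [AddCommGroup G]
    (ι : ℤ →+ S) (p : S →+ G)
    (hp : Function.Surjective p)
    (hexact : ι.range = p.ker)
    (χ : S →+ ℤ) (hχ : ∀ n : ℤ, χ (ι n) = 2 * n)
    (w : G →+ ZMod 2) (hw : ∀ x : S, w (p x) = ((χ x : ℤ) : ZMod 2)) :
    Function.Injective (fun x : S => ((p x, χ x) : G × ℤ)) ∧
    Set.range (fun x : S => ((p x, χ x) : G × ℤ))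
      = {q : G × ℤ | w q.1 = (q.2 : ZMod 2)} ∧
    ∃ e : S ≃+ pullbackZmodTwo w, ∀ x : S, (e x : G × ℤ) = (p x, χ x) := by
  have hχι : Function.Injective (χ.comp ι) := fun a b hab => by
    simpa [hχ] using hab
  have hinj : Function.Injective (p.prod χ) :=
    AddMonoidHom.injective_prod_of_ker_le_range ι p χ hexact.ge hχι
  have hrange : (p.prod χ).range = pullbackZmodTwo w :=
    AddMonoidHom.range_prod_eq_pullbackZmodTwo ι p hp hexact.le χ hχ w hw
  refine ⟨hinj, ?_, (AddMonoidHom.ofInjective hinj).trans (AddEquiv.addSubgroupCongr hrange),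
    fun x => rfl⟩
  exact congrArg SetLike.coe hrange

/-- Given the short exact sequence `0 → ℤ → S → G → 0` with `χ ∘ ι = 2·`
and `w : G → ℤ/2` with `w (p x) = χ x mod 2`, the map `x ↦ (p x, χ x)` is injective
with image the pullback subgroup `G ×_{ℤ/2} ℤ`, and induces an isomorphism
`S ≅ G ×_{ℤ/2} ℤ`. -/
theorem skk_even_dim_pullback_description
    {S G : Type*} [AddCommGroup S] [AddCommGroup G]
    (ι : ℤ →+ S) (p : S →+ G)
    (hι : Function.Injective ι) (hp : Function.Surjective p)
    (hexact : ι.range = p.ker)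
    (χ : S →+ ℤ) (hχ : ∀ n : ℤ, χ (ι n) = 2 * n)
    (w : G →+ ZMod 2) (hw : ∀ x : S, w (p x) = ((χ x : ℤ) : ZMod 2)) :
    Function.Injective (fun x : S => ((p x, χ x) : G × ℤ)) ∧
    Set.range (fun x : S => ((p x, χ x) : G × ℤ))
      = {q : G × ℤ | w q.1 = (q.2 : ZMod 2)} ∧
    ∃ e : S ≃+ pullbackZmodTwo w, ∀ x : S, (e x : G × ℤ) = (p x, χ x) :=
  skk_even_dim_pullback_description_general ι p hp hexact χ hχ w hw
end

section
/- Let 0 → ℤ →ι S →p G → 0 be a short exact sequence of abelian groups with G a torsion group, and let χ : S → ℤ be a group homomorphism with χ(ι(n)) = 2n for all n ∈ ℤ. Then there exists a group homomorphism ψ : S → ℤ with ψ(ι(n)) = n for all n ∈ ℤ if and only if χ(x) is even for every x ∈ S; and in that case the map x ↦ χ(x)/2 is such a splitting. -/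
/-!
A splitting `ψ` of `ι` gives `χ = 2ψ` on the image of `ι`. Since the cokernel `G` is torsion,
every `x` has a positive multiple `k • x` in that image, and `ℤ` is torsion-free, so `χ = 2ψ`
everywhere and `χ` only takes even values. Conversely, if `χ` is even then `χ / 2` is additive
and splits `ι`.
-/

namespace AddMonoidHom

def half {S : Type*} [AddMonoid S] (χ : S →+ ℤ) (hχ : ∀ x, Even (χ x)) : S →+ ℤ where
  toFun x := χ x / 2
  map_zero' := by simp
  map_add' x y := by
    obtain ⟨a, ha⟩ := hχ x
    obtain ⟨b, hb⟩ := hχ y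
    rw [map_add, ha, hb]
    omega

@[simp]
theorem half_apply {S : Type*} [AddMonoid S] (χ : S →+ ℤ) (hχ : ∀ x, Even (χ x)) (x : S) :
    χ.half hχ x = χ x / 2 :=
  rfl

theorem eq_of_eqOn_of_exists_nsmul_mem {S M : Type*} [AddMonoid S] [AddMonoid M]
    [IsAddTorsionFree M] {f g : S →+ M} {s : Set S} (hs : ∀ x, ∃ k : ℕ, 0 < k ∧ k • x ∈ s)
    (hfg : Set.EqOn f g s) : f = g := by
  ext x
  obtain ⟨k, hk, hkx⟩ := hs x
  refine IsAddTorsionFree.nsmul_right_injective hk.ne' ?_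
  simpa only [map_nsmul] using hfg hkx

end AddMonoidHom

theorem exists_pos_nsmul_mem_range_of_isTorsion {A S G : Type*} [AddGroup A] [AddGroup S]
    [AddGroup G] {ι : A →+ S} {p : S →+ G} (hexact : ι.range = p.ker)
    (htor : ∀ g : G, ∃ k : ℕ, 0 < k ∧ k • g = 0) (x : S) :
    ∃ k : ℕ, 0 < k ∧ k • x ∈ ι.range := by
  obtain ⟨k, hk, hkx⟩ := htor (p x)
  refine ⟨k, hk, ?_⟩
  rw [hexact, AddMonoidHom.mem_ker, map_nsmul, hkx]

theorem skk_even_dim_torsion_bordism_split_iff_general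
    {S G : Type*} [AddCommGroup S] [AddCommGroup G]
    (ι : ℤ →+ S) (p : S →+ G)
    (hexact : ι.range = p.ker)
    (htor : ∀ g : G, ∃ k : ℕ, 0 < k ∧ k • g = 0)
    (χ : S →+ ℤ) (hχ : ∀ n : ℤ, χ (ι n) = 2 * n) :
    ((∃ ψ : S →+ ℤ, ∀ n : ℤ, ψ (ι n) = n) ↔ (∀ x : S, Even (χ x))) ∧
    ((∀ x : S, Even (χ x)) →
      ∃ ψ : S →+ ℤ, (∀ n : ℤ, ψ (ι n) = n) ∧ ∀ x : S, ψ x = χ x / 2) := by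
  have split_of_even (hev : ∀ x, Even (χ x)) :
      ∃ ψ : S →+ ℤ, (∀ n : ℤ, ψ (ι n) = n) ∧ ∀ x : S, ψ x = χ x / 2 :=
    ⟨χ.half hev, fun n => by simp [hχ], fun _ => rfl⟩
  refine ⟨⟨fun ⟨ψ, hψ⟩ x => ?_, fun hev => (split_of_even hev).imp fun _ h => h.1⟩,
    split_of_even⟩
  have hχψ : χ = 2 • ψ :=
    AddMonoidHom.eq_of_eqOn_of_exists_nsmul_mem
      (exists_pos_nsmul_mem_range_of_isTorsion hexact htor)
      (by rintro _ ⟨n, rfl⟩; simp [hχ, hψ, two_mul])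
  exact ⟨ψ x, by rw [hχψ, AddMonoidHom.nsmul_apply, two_nsmul]⟩

/-- For the short exact sequence `0 → ℤ → S → G → 0` with `G` torsion and
`χ ∘ ι = 2·`, the sequence splits iff `χ x` is even for all `x`, in which case
`x ↦ χ x / 2` is a splitting. -/
theorem skk_even_dim_torsion_bordism_split_iff
    {S G : Type*} [AddCommGroup S] [AddCommGroup G]
    (ι : ℤ →+ S) (p : S →+ G)
    (hι : Function.Injective ι) (hp : Function.Surjective p)
    (hexact : ι.range = p.ker)
    (htor : ∀ g : G, ∃ k : ℕ, 0 < k ∧ k • g = 0)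
    (χ : S →+ ℤ) (hχ : ∀ n : ℤ, χ (ι n) = 2 * n) :
    ((∃ ψ : S →+ ℤ, ∀ n : ℤ, ψ (ι n) = n) ↔ (∀ x : S, Even (χ x))) ∧
    ((∀ x : S, Even (χ x)) →
      ∃ ψ : S →+ ℤ, (∀ n : ℤ, ψ (ι n) = n) ∧ ∀ x : S, ψ x = χ x / 2) :=
  skk_even_dim_torsion_bordism_split_iff_general ι p hexact htor χ hχ
end

section
/- Let k ≥ 1 and let ε : ℤ/2^k → ℤ/2 be the canonical reduction homomorphism. Then the pullback subgroup {(g, n) ∈ ℤ/2^k × ℤ : ε(g) = n mod 2} of ℤ/2^k × ℤ is isomorphic as an abelian group to ℤ × ℤ/2^{k−1}. -/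
/-! Choosing `g₀` with `w g₀ = 1`, the map `(g, n) ↦ (n, g - n • g₀)` splits the pullback as
`ℤ × ker w`. For the reduction `ℤ/2^k → ℤ/2` the kernel has index 2 in a cyclic group of
order `2^k`, so it is cyclic of order `2^(k-1)`. -/

section Pullback

variable {G : Type*} [AddCommGroup G]

theorem mem_pullbackZmodTwo {w : G →+ ZMod 2} {q : G × ℤ} :
    q ∈ pullbackZmodTwo w ↔ w q.1 = (q.2 : ZMod 2) :=
  Iff.rfl

def pullbackZmodTwoEquivProdKer (w : G →+ ZMod 2) (g₀ : G) (hg₀ : w g₀ = 1) :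
    pullbackZmodTwo w ≃+ ℤ × w.ker where
  toFun q := (q.1.2, ⟨q.1.1 - q.1.2 • g₀, by
    rw [AddMonoidHom.mem_ker, map_sub, map_zsmul, hg₀, mem_pullbackZmodTwo.1 q.2, zsmul_one,
      sub_self]⟩)
  invFun p := ⟨(p.2 + p.1 • g₀, p.1), by
    rw [mem_pullbackZmodTwo, map_add, map_zsmul, hg₀, AddMonoidHom.mem_ker.1 p.2.2, zsmul_one,
      zero_add]⟩
  left_inv q := by ext <;> simp
  right_inv p := by ext <;> simp
  map_add' q r := by
    ext
    · simp
    · simp only [AddSubgroup.coe_add, Prod.fst_add, Prod.snd_add, add_zsmul, Prod.mk_add_mk,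
        AddMemClass.mk_add_mk]
      abel

end Pullback

theorem card_ker_castHom_mul {m N : ℕ} (h : m ∣ N) :
    Nat.card (ZMod.castHom h (ZMod m)).toAddMonoidHom.ker * m = N := by
  have hrange : (ZMod.castHom h (ZMod m)).toAddMonoidHom.range = ⊤ :=
    AddMonoidHom.range_eq_top.2 (ZMod.castHom_surjective h)
  have hcard := (ZMod.castHom h (ZMod m)).toAddMonoidHom.ker.card_mul_index
  rwa [AddSubgroup.index_ker, hrange, AddSubgroup.card_top, Nat.card_zmod, Nat.card_zmod] at hcard

/-- For `k ≥ 1` and `ε : ℤ/2^k → ℤ/2` the canonical reduction, the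
pullback `(ℤ/2^k) ×_{ℤ/2} ℤ` is isomorphic to `ℤ × ℤ/2^(k-1)`. -/
theorem pullback_zmod_pow_two
    (k : ℕ) (hk : 1 ≤ k) :
    Nonempty
      ((pullbackZmodTwo
          ((ZMod.castHom (dvd_pow_self 2 (by omega : k ≠ 0)) (ZMod 2)).toAddMonoidHom :
            ZMod (2 ^ k) →+ ZMod 2))
        ≃+ ℤ × ZMod (2 ^ (k - 1))) := by
  let ε := ZMod.castHom (dvd_pow_self 2 (by omega : k ≠ 0)) (ZMod 2)
  have hcard : Nat.card ε.toAddMonoidHom.ker = Nat.card (ZMod (2 ^ (k - 1))) := by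
    refine Nat.eq_of_mul_eq_mul_right two_pos ?_
    rw [card_ker_castHom_mul, Nat.card_zmod, ← pow_succ, Nat.sub_add_cancel hk]
  exact ⟨(pullbackZmodTwoEquivProdKer _ 1 (map_one ε)).trans
    ((AddEquiv.refl ℤ).prodCongr (addEquivOfAddCyclicCardEq hcard))⟩
end

section
/- Let ε : ℤ/8 × ℤ/2 → ℤ/2 be the homomorphism ε(x, y) = (x mod 2) + y, where x mod 2 denotes the image of x under the canonical reduction ℤ/8 → ℤ/2. Then the pullback subgroup {((x,y), n) ∈ (ℤ/8 × ℤ/2) × ℤ : ε(x,y) = n mod 2} is isomorphic as an abelian group to ℤ × ℤ/8. -/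
/-- The `ℤ`-coordinate determines the `ℤ/2`-coordinate `y = n - f x`, so forgetting `y` is an
isomorphism. -/
def pullbackZmodTwoProdEquiv {A : Type*} [AddCommGroup A] (f : A →+ ZMod 2)
    (w : A × ZMod 2 →+ ZMod 2) (hw : ∀ x y, w (x, y) = f x + y) :
    pullbackZmodTwo w ≃+ ℤ × A where
  toFun p := (p.1.2, p.1.1.1)
  invFun q := ⟨((q.2, (q.1 : ZMod 2) - f q.2), q.1), by
    change w _ = _
    rw [hw, add_sub_cancel]⟩
  left_inv := by
    rintro ⟨⟨⟨x, y⟩, n⟩, h⟩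
    have hn : f x + y = (n : ZMod 2) := (hw x y).symm.trans h
    ext
    · rfl
    · exact sub_eq_of_eq_add' hn.symm
    · rfl
  right_inv _ := rfl
  map_add' _ _ := rfl

/-- For `ε : ℤ/8 × ℤ/2 → ℤ/2`, `ε(x,y) = (x mod 2) + y`, the pullback
`(ℤ/8 × ℤ/2) ×_{ℤ/2} ℤ` is isomorphic to `ℤ × ℤ/8`.  This computes `SKK^{Pin^c}_4`. -/
theorem pullback_pinc_four
    (ε : ZMod 8 × ZMod 2 →+ ZMod 2)
    (hε : ∀ (x : ZMod 8) (y : ZMod 2),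
      ε (x, y) = ZMod.castHom (by norm_num : (2 : ℕ) ∣ 8) (ZMod 2) x + y) :
    Nonempty (pullbackZmodTwo ε ≃+ ℤ × ZMod 8) :=
  ⟨pullbackZmodTwoProdEquiv (ZMod.castHom (by norm_num : (2 : ℕ) ∣ 8) (ZMod 2)).toAddMonoidHom
    ε hε⟩
end

section
/- Let C be a category that is reversible, meaning that for every pair of objects Y, Z and every morphism f : Y → Z there exists some morphism Z → Y. Fix an object X of C and let L : C → Ĉ be the localization of C at the class of all morphisms (so that L(f) is an isomorphism for every morphism f of C). Then every endomorphism of L(X) in Ĉ belongs to the submonoid of the endomorphism monoid End(L(X)) generated by the set of all h : L(X) → L(X) such that either h = L(e) for some endomorphism e : X → X in C, or there exists an endomorphism e : X → X in C with h ∘ L(e) = id and L(e) ∘ h = id (that is, h is a two-sided inverse of L(e)). -/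
/-!
Let `M` be the submonoid in question. For `Y : C` consider the orbit `M · L(X ⟶ Y)` inside
`L.obj X ⟶ L.obj Y`. Post-composition with `L.map f` carries the orbit at `Y` onto the orbit at `Z`;
surjectivity is where reversibility enters, since a morphism out of `X` into `Z` can be routed back
through `Y`. So the orbits form a section over `C` of the functor `A ↦ Set (L.obj X ⟶ A)`, and a
section over `C` is compatible with every morphism of the localization. For `h : L.obj X ⟶ L.obj X`,
the orbit at `X` contains `𝟙` and lies in `M`, and it is stable under post-composition with `h`;
hence `h ∈ M`.
-/

open CategoryTheory

namespace CategoryTheory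

lemma End.comp_mem {D : Type*} [Category D] {A : D} {M : Submonoid (End A)} {a b : End A}
    (ha : a ∈ M) (hb : b ∈ M) : (a ≫ b : End A) ∈ M :=
  mul_mem hb ha

lemma Localization.map_eq_of_mem_sections {C D : Type*} [Category C] [Category D]
    (L : C ⥤ D) (W : MorphismProperty C) [L.IsLocalization W] {F : D ⥤ Type*}
    {s : ∀ Y, F.obj (L.obj Y)} (hs : s ∈ (L ⋙ F).sections) {Y Z : C} (g : L.obj Y ⟶ L.obj Z) :
    F.map g (s Y) = s Z := by
  let τ : L ⋙ (Functor.const D).obj PUnit ⟶ L ⋙ F :=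
    { app Y := TypeCat.ofHom fun _ => s Y
      naturality _ _ f := by ext; exact (hs f).symm }
  let σ := (Localization.fullyFaithfulWhiskeringLeft L W _).preimage τ
  have hσ (Y : C) : σ.app (L.obj Y) = τ.app Y :=
    congr_app ((Localization.fullyFaithfulWhiskeringLeft L W _).map_preimage τ) Y
  have := congr_arg (fun φ => φ PUnit.unit) (σ.naturality g)
  simpa [hσ, τ] using this.symm

variable {C D : Type*} [Category C] [Category D] (L : C ⥤ D) (X : C)

def mapEndSubmonoid : Submonoid (End (L.obj X)) :=
  Submonoid.closure {h : End (L.obj X) | (∃ e : X ⟶ X, h = L.map e) ∨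
    (∃ e : X ⟶ X, L.map e ≫ h = 𝟙 (L.obj X) ∧ h ≫ L.map e = 𝟙 (L.obj X))}

lemma map_mem_mapEndSubmonoid (e : X ⟶ X) : L.map e ∈ mapEndSubmonoid L X :=
  Submonoid.subset_closure (Or.inl ⟨e, rfl⟩)

lemma mem_mapEndSubmonoid_of_inverse {e : X ⟶ X} {h : End (L.obj X)}
    (h₁ : L.map e ≫ h = 𝟙 (L.obj X)) (h₂ : h ≫ L.map e = 𝟙 (L.obj X)) :
    h ∈ mapEndSubmonoid L X :=
  Submonoid.subset_closure (Or.inr ⟨e, h₁, h₂⟩)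

lemma map_comp_inv_map_mem_mapEndSubmonoid {Z : C} (a b : X ⟶ Z) (r : Z ⟶ X)
    [IsIso (L.map b)] [IsIso (L.map r)] :
    (L.map a ≫ inv (L.map b) : End (L.obj X)) ∈ mapEndSubmonoid L X := by
  have : L.map a ≫ inv (L.map b) = L.map (a ≫ r) ≫ inv (L.map b ≫ L.map r) := by simp
  rw [this]
  exact End.comp_mem (map_mem_mapEndSubmonoid L X _)
    (mem_mapEndSubmonoid_of_inverse L X (e := b ≫ r) (by simp) (by simp))

def homOrbit (Y : C) : Set (L.obj X ⟶ L.obj Y) :=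
  {g | ∃ m ∈ mapEndSubmonoid L X, ∃ p : X ⟶ Y, g = m ≫ L.map p}

lemma image_comp_map_homOrbit (hL : (⊤ : MorphismProperty C).IsInvertedBy L)
    (hrev : ∀ {Y Z : C}, (Y ⟶ Z) → Nonempty (Z ⟶ Y)) {Y Z : C} (f : Y ⟶ Z) :
    (· ≫ L.map f) '' homOrbit L X Y = homOrbit L X Z := by
  ext g
  constructor
  · rintro ⟨_, ⟨m, hm, p, rfl⟩, rfl⟩
    exact ⟨m, hm, p ≫ f, by simp⟩
  · rintro ⟨m, hm, q, rfl⟩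
    obtain ⟨f'⟩ := hrev f
    obtain ⟨r⟩ := hrev q
    have := hL (q ≫ f' ≫ f) trivial
    have := hL r trivial
    refine ⟨_, ⟨m ≫ L.map q ≫ inv (L.map (q ≫ f' ≫ f)),
      End.comp_mem hm (map_comp_inv_map_mem_mapEndSubmonoid L X _ _ r), q ≫ f', rfl⟩, ?_⟩
    simp

end CategoryTheory

/-- If `C` is a reversible category and `L : C ⥤ D` is the localization
of `C` at all morphisms, then every endomorphism of `L.obj X` lies in the submonoid of
`End (L.obj X)` generated by the images `L.map e` of endomorphisms `e : X ⟶ X` of `C`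
together with the (two-sided) inverses of such images. -/
theorem endomorphisms_of_localization_generated_by_images
    {C D : Type*} [Category C] [Category D]
    (L : C ⥤ D) [L.IsLocalization ⊤]
    (hrev : ∀ {Y Z : C}, (Y ⟶ Z) → Nonempty (Z ⟶ Y))
    (X : C) :
    ∀ h : End (L.obj X),
      h ∈ Submonoid.closure
        {h : End (L.obj X) |
          (∃ e : X ⟶ X, h = L.map e) ∨
          (∃ e : X ⟶ X, L.map e ≫ h = 𝟙 (L.obj X) ∧ h ≫ L.map e = 𝟙 (L.obj X))} := by
  intro h
  let F := coyoneda.obj (Opposite.op (L.obj X)) ⋙ ofTypeFunctor Set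
  have hsec : (fun Y => homOrbit L X Y : ∀ Y, F.obj (L.obj Y)) ∈ (L ⋙ F).sections :=
    fun f => image_comp_map_homOrbit L X (Localization.inverts L ⊤) hrev f
  have h_mem_orbit : h ∈ homOrbit L X X := by
    rw [← Localization.map_eq_of_mem_sections L ⊤ hsec h]
    exact ⟨𝟙 _, ⟨𝟙 _, one_mem _, 𝟙 X, by simp⟩, by simp⟩
  obtain ⟨m, hm, p, rfl⟩ := h_mem_orbit
  exact End.comp_mem hm (map_mem_mapEndSubmonoid L X p)
end
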